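/- Fix a vertex v₀ of G. The set of divisors of the form v ↦ indeg_O(v) - 1, as O ranges over the G-semiorientations in which v₀ is a source (every edge incident to v₀ oriented away from v₀) and indeg_O(v) ≥ 1 for every vertex v ≠ v₀, equals the set of divisors c on G with c(v₀) = -1 whose restriction to V∖{v₀} is a superstable configuration on G with sink v₀; that is, this set of divisors is exactly the set of G-parking functions with respect to v₀. -/

import Mathlib

namespace Soap

variable {V : Type*} {W : Type*}

/-- A partial orientation of `G`: a relation `O` such that `O u v` implies `{u,v}` is an
edge and the reverse pair is not in `O`. -/
def IsPartialOrientation (G : SimpleGraph V) (O : V → V → Prop) : Prop :=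
  ∀ u v, O u v → G.Adj u v ∧ ¬ O v u

/-- The edge `{u,v}` of `G` is blank for the partial orientation `O`. -/
def IsBlank (G : SimpleGraph V) (O : V → V → Prop) (u v : V) : Prop :=
  G.Adj u v ∧ ¬ O u v ∧ ¬ O v u

/-- A `G`-semiorientation: a partial orientation such that every potential cycle
(a cycle of `G`, here traversed as `c : ZMod n → V`, none of whose edges is oriented
against the traversal) has strictly more blank edges than oriented edges. -/
def IsSemiorientation (G : SimpleGraph V) (O : V → V → Prop) : Prop :=
  IsPartialOrientation G O ∧
  ∀ (n : ℕ) (c : ZMod n → V), 3 ≤ n → Function.Injective c →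
    (∀ i, G.Adj (c i) (c (i + 1))) →
    (∀ i, ¬ O (c (i + 1)) (c i)) →
    {i : ZMod n | O (c i) (c (i + 1))}.ncard <
      {i : ZMod n | IsBlank G O (c i) (c (i + 1))}.ncard

/-- A semiorder (unit interval order) given by its strict order relation `lt`. -/
def IsSemiorder (lt : V → V → Prop) : Prop :=
  ∃ t : V → ℝ, ∀ u v, lt u v ↔ t u + 1 < t v

/-- Compatibility of a (semi)order `lt` and a partial orientation `O`:
for every edge `{u,v}`, `u < v` iff `(u,v) ∈ O`. -/
def Compatible (G : SimpleGraph V) (lt : V → V → Prop) (O : V → V → Prop) : Prop :=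
  ∀ u v, G.Adj u v → (lt u v ↔ O u v)

/-- Indegree of a vertex with respect to a partial orientation. -/
noncomputable def indeg (O : V → V → Prop) (v : V) : ℕ := {u | O u v}.ncard

/-- `n_P(v)`: the number of vertices `u` with `u < v` and `{u,v}` an edge of `G`. -/
noncomputable def nP (G : SimpleGraph V) (lt : V → V → Prop) (v : V) : ℕ :=
  {u | lt u v ∧ G.Adj u v}.ncard

/-- Degree of a vertex in a graph. -/
noncomputable def vdeg (H : SimpleGraph W) (v : W) : ℕ := {u | H.Adj v u}.ncard

/-- A configuration `c` on the graph `H` with sink `q` is superstable: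
`c ≥ 0` off the sink, and no nonempty set `X` of nonsink vertices can be fired legally,
i.e. `c - Δ̃·1_X ≥ 0` fails (coordinatewise off the sink), where
`(Δ̃·1_X)_v = deg(v)·1_X(v) - #{u ∈ X : u ∼ v}`. -/
def Superstable (H : SimpleGraph W) (q : W) (c : W → ℤ) : Prop :=
  (∀ v, v ≠ q → 0 ≤ c v) ∧
  ¬ ∃ X : Set W, X.Nonempty ∧ q ∉ X ∧
    ∀ v, v ≠ q →
      0 ≤ c v - X.indicator (fun u => (vdeg H u : ℤ)) v + ({u | u ∈ X ∧ H.Adj v u}.ncard : ℤ)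

/-- `K(G)`: the graph `G` with a new vertex `none` adjoined, joined to every vertex of `G`. -/
def KG (G : SimpleGraph V) : SimpleGraph (Option V) where
  Adj x y := x ≠ y ∧ ∀ u v, x = some u → y = some v → G.Adj u v
  symm := by
    constructor
    rintro x y ⟨hne, h⟩
    exact ⟨hne.symm, fun u v hu hv => (h v u hv hu).symm⟩
  loopless := by constructor; rintro x ⟨hne, -⟩; exact hne rfl

/-- A divisor `c : V → ℤ` on `G` is quasi-superstable if the configuration
`v ↦ c v + 1` on `K(G)` (with sink the new vertex) is superstable. -/
def QuasiSuperstable (G : SimpleGraph V) (c : V → ℤ) : Prop :=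
  Superstable (KG G) none (fun x => x.elim 0 (fun v => c v + 1))

/-- An acyclic orientation of `G`: a partial orientation in which every edge is
oriented and which contains no directed cycle. -/
def IsAcyclicOrientation (G : SimpleGraph V) (O : V → V → Prop) : Prop :=
  IsPartialOrientation G O ∧ (∀ u v, G.Adj u v → O u v ∨ O v u) ∧
  ¬ ∃ (n : ℕ) (c : ZMod n → V), 0 < n ∧ Function.Injective c ∧ ∀ i, O (c i) (c (i + 1))

/-- The union of the hyperplanes `x u - x v = 1` of the `G`-semiorder arrangement. -/
def hyperplanesUnion (G : SimpleGraph V) : Set (V → ℝ) :=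
  {x | ∃ u v, G.Adj u v ∧ x u - x v = 1}

/-- The regions of the `G`-semiorder arrangement: connected components of the
complement of the union of its hyperplanes. -/
def Regions (G : SimpleGraph V) : Set (Set (V → ℝ)) :=
  {r | ∃ x, x ∉ hyperplanesUnion G ∧ r = connectedComponentIn (hyperplanesUnion G)ᶜ x}

/-- The candidate region attached to a partial orientation `O`. -/
def rho (G : SimpleGraph V) (O : V → V → Prop) : Set (V → ℝ) :=
  {x | (∀ u v, O u v → x v - x u > 1) ∧ (∀ u v, IsBlank G O u v → |x u - x v| < 1)}

/-- `K(G)₀`: the graph `G` with an edge `{v, v₀}` added for each vertex `v ≠ v₀`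
not already adjacent to `v₀`. -/
def KG0 (G : SimpleGraph V) (v₀ : V) : SimpleGraph V where
  Adj u v := G.Adj u v ∨ (u ≠ v ∧ (u = v₀ ∨ v = v₀))
  symm := by
    constructor
    rintro u v (h | ⟨hne, h⟩)
    · exact Or.inl h.symm
    · exact Or.inr ⟨hne.symm, h.symm⟩
  loopless := by
    constructor
    rintro v (h | ⟨hne, -⟩)
    · exact G.loopless.irrefl v h
    · exact hne rfl

/-- The union of the hyperplanes of the `(G,v₀)`-semiorder arrangement. -/
def hyperplanesUnion0 (G : SimpleGraph V) (v₀ : V) : Set ({v : V // v ≠ v₀} → ℝ) :=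
  {x | ∃ u v : {v : V // v ≠ v₀}, G.Adj u.1 v.1 ∧ x u - x v = 1}

/-- The regions of the `(G,v₀)`-semiorder arrangement. -/
def Regions0 (G : SimpleGraph V) (v₀ : V) : Set (Set ({v : V // v ≠ v₀} → ℝ)) :=
  {r | ∃ x, x ∉ hyperplanesUnion0 G v₀ ∧
    r = connectedComponentIn (hyperplanesUnion0 G v₀)ᶜ x}

/-- The candidate region attached to a partial orientation `O`, in the sink context. -/
def rho0 (G : SimpleGraph V) (v₀ : V) (O : V → V → Prop) :
    Set ({v : V // v ≠ v₀} → ℝ) :=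
  {x | (∀ u v : {v : V // v ≠ v₀}, O u.1 v.1 → x v - x u > 1) ∧
    (∀ u v : {v : V // v ≠ v₀}, IsBlank G O u.1 v.1 → |x u - x v| < 1)}
open Classical in
lemma no_dicycle [Finite V] (G : SimpleGraph V) (O : V → V → Prop)
    (hsem : IsSemiorientation G O) (g : V → V) (X : Set V) (hX : X.Nonempty)
    (hg : ∀ v ∈ X, g v ∈ X ∧ O (g v) v) : False := by
  obtain ⟨v1, hv1⟩ := hX
  have horb : ∀ m, g^[m] v1 ∈ X := by
    intro m; induction m with
    | zero => simpa using hv1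
    | succ n ih => rw [Function.iterate_succ_apply']; exact (hg _ ih).1
  obtain ⟨a, b, hne, heq⟩ := Finite.exists_ne_map_eq_of_infinite (fun m => g^[m] v1)
  wlog hab : a < b generalizing a b
  · exact this b a hne.symm heq.symm (by omega)
  set w := g^[a] v1 with hw
  have hper : ∃ p, 0 < p ∧ g^[p] w = w := by
    refine ⟨b - a, by omega, ?_⟩
    rw [hw, ← Function.iterate_add_apply]
    have : b - a + a = b := by omega
    rw [this]; exact heq.symm
  set p := Nat.find hper with hp
  obtain ⟨hppos, hpw⟩ := Nat.find_spec hper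
  have horbw : ∀ m, g^[m] w ∈ X := fun m => by
    rw [hw, ← Function.iterate_add_apply]; exact horb _
  have hOg : ∀ v ∈ X, O (g v) v := fun v hv => (hg v hv).2
  -- injectivity of iterates below p
  have hinjit : ∀ s t, s < t → t < p → g^[s] w ≠ g^[t] w := by
    intro s t hst htp hst_eq
    have h1 : g^[p - t + s] w = w := by
      rw [Function.iterate_add_apply, hst_eq, ← Function.iterate_add_apply]
      have : p - t + t = p := by omega
      rw [this]; exact hpw
    have : ¬ (0 < p - t + s ∧ g^[p - t + s] w = w) := Nat.find_min hper (by omega)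
    exact this ⟨by omega, h1⟩
  rw [← hp] at hpw hppos
  clear_value p
  have hp1 : p ≠ 1 := by
    intro h
    have : g w = w := by rw [h] at hpw; simpa using hpw
    have hO := hOg w (horbw 0)
    rw [this] at hO
    exact G.loopless.irrefl w (hsem.1 w w hO).1
  have hp2 : p ≠ 2 := by
    intro h
    have h2 : g (g w) = w := by
      rw [h] at hpw
      rw [show (2:ℕ) = 1 + 1 from rfl, Function.iterate_add_apply] at hpw
      simpa using hpw
    have hO1 := hOg w (horbw 0)
    have hO2 := hOg (g w) (by simpa [Function.iterate_succ_apply'] using horbw 1)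
    rw [h2] at hO2
    exact (hsem.1 _ _ hO1).2 hO2
  have hp3 : 3 ≤ p := by omega
  haveI : NeZero p := ⟨by omega⟩
  set c : ZMod p → V := fun k => g^[(-k).val] w with hc
  have hval : ∀ a : ZMod p, g^[(a+1).val] w = g (g^[a.val] w) := by
    intro a
    have h1 : (a + 1).val = (a.val + 1) % p := by
      rw [ZMod.val_add]
      congr 1
      haveI : Fact (1 < p) := ⟨by omega⟩
      rw [ZMod.val_one]
    rcases lt_or_eq_of_le (Nat.succ_le_of_lt (ZMod.val_lt a)) with h | h
    · rw [h1, Nat.mod_eq_of_lt h, Function.iterate_succ_apply']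
    · have : g (g^[a.val] w) = g^[a.val + 1] w := (Function.iterate_succ_apply' g _ w).symm
      rw [h1, this]
      have h' : a.val + 1 = p := h
      rw [h', Nat.mod_self, hpw]
      rfl
  have hOcyc : ∀ i : ZMod p, O (c i) (c (i+1)) := by
    intro i
    have h1 : c i = g (c (i+1)) := by
      have := hval (-(i+1))
      have h2 : -(i+1) + 1 = -i := by ring
      rw [h2] at this
      simpa [hc] using this
    rw [h1]
    exact hOg _ (horbw _)
  have hinj : Function.Injective c := by
    intro i j hij
    have h1 : (-i).val = (-j).val := by
      by_contra hne'
      rcases Nat.lt_or_ge (-i).val (-j).val with h | h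
      · exact hinjit _ _ h (ZMod.val_lt _) hij
      · exact hinjit _ _ (by omega) (ZMod.val_lt _) hij.symm
    have : (-i) = (-j) := ZMod.val_injective _ h1
    simpa using neg_injective this
  have hadj : ∀ i : ZMod p, G.Adj (c i) (c (i+1)) := fun i => (hsem.1 _ _ (hOcyc i)).1
  have hnob : ∀ i : ZMod p, ¬ O (c (i+1)) (c i) := fun i => (hsem.1 _ _ (hOcyc i)).2
  have hlt := hsem.2 p c hp3 hinj hadj hnob
  have hempty : {i : ZMod p | IsBlank G O (c i) (c (i+1))} = ∅ := by
    ext i; simp only [Set.mem_setOf_eq, Set.mem_empty_iff_false, iff_false]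
    intro hb; exact hb.2.1 (hOcyc i)
  rw [hempty, Set.ncard_empty] at hlt
  exact Nat.not_lt_zero _ hlt


open Classical in
lemma forward_dir {V : Type*} [Fintype V] (G : SimpleGraph V) (v₀ : V) (O : V → V → Prop)
    (hsem : IsSemiorientation G O) (hsrc : ∀ v, G.Adj v₀ v → O v₀ v)
    (hind : ∀ v, v ≠ v₀ → 1 ≤ indeg O v) :
    (indeg O v₀ : ℤ) - 1 = -1 ∧ Superstable G v₀ (fun v => (indeg O v : ℤ) - 1) := by
  have hv₀ : indeg O v₀ = 0 := by
    have : {u | O u v₀} = ∅ := by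
      ext u; simp only [Set.mem_setOf_eq, Set.mem_empty_iff_false, iff_false]
      intro hu
      exact (hsem.1 u v₀ hu).2 (hsrc u (hsem.1 u v₀ hu).1.symm)
    rw [indeg, this, Set.ncard_empty]
  refine ⟨by rw [hv₀]; ring, ?_, ?_⟩
  · intro v hv
    have := hind v hv
    show (0:ℤ) ≤ (indeg O v : ℤ) - 1
    omega
  rintro ⟨X, hXne, hqX, hfire⟩
  have hgex : ∀ v ∈ X, ∃ u ∈ X, O u v := by
    intro v hv
    by_contra hno
    push_neg at hno
    have hvne : v ≠ v₀ := fun h => hqX (h ▸ hv)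
    have hfv := hfire v hvne
    rw [Set.indicator_of_mem hv] at hfv
    have hsub : {u | O u v} ⊆ {u | G.Adj v u} \ {u | u ∈ X ∧ G.Adj v u} := by
      intro u hu
      exact ⟨(hsem.1 u v hu).1.symm, fun h2 => hno u h2.1 hu⟩
    have hsub2 : {u | u ∈ X ∧ G.Adj v u} ⊆ {u | G.Adj v u} := fun u hu => hu.2
    have h1 : indeg O v ≤ ({u | G.Adj v u} \ {u | u ∈ X ∧ G.Adj v u}).ncard :=
      Set.ncard_le_ncard hsub (Set.toFinite _)
    have h2 : ({u | G.Adj v u} \ {u | u ∈ X ∧ G.Adj v u}).ncard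
        = vdeg G v - {u | u ∈ X ∧ G.Adj v u}.ncard :=
      Set.ncard_diff hsub2 (Set.toFinite _)
    have h3 : {u | u ∈ X ∧ G.Adj v u}.ncard ≤ vdeg G v :=
      Set.ncard_le_ncard hsub2 (Set.toFinite _)
    rw [h2] at h1
    simp only [vdeg] at h1 h3 hfv
    have h4 : ({u | G.Adj v u} : Set V).ncard - {u | u ∈ X ∧ G.Adj v u}.ncard
        + {u | u ∈ X ∧ G.Adj v u}.ncard = ({u | G.Adj v u} : Set V).ncard := by omega
    omega
  set g : V → V := fun v => if h : v ∈ X then (hgex v h).choose else v with hgdef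
  have hg : ∀ v ∈ X, g v ∈ X ∧ O (g v) v := by
    intro v hv
    have h := (hgex v hv).choose_spec
    simp only [hgdef, dif_pos hv]
    exact ⟨h.1, h.2⟩
  exact no_dicycle G O hsem g X hXne hg

noncomputable def fA (τ : ℕ → ℕ) : ℕ → ℝ
  | 0 => 0
  | (j+1) =>
      if min (τ (j+1)) j = j then fA τ j + 2
      else
        (max (fA τ j) (fA τ (min (τ (j+1)) j) + 1) +
          min (fA τ (min (τ (j+1)) j + 1) + 1)
              (max (fA τ j) (fA τ (min (τ (j+1)) j) + 1) + 2)) / 2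
termination_by j => j
decreasing_by all_goals omega

lemma fA_props (τ : ℕ → ℕ) (n : ℕ) (hlt : ∀ j, 0 < j → j < n → τ j < j)
    (hmono : ∀ i j, 0 < i → i ≤ j → j < n → τ i ≤ τ j) :
    ∀ j, j < n → 0 < j →
      fA τ (j-1) < fA τ j ∧ fA τ (τ j) + 1 < fA τ j ∧ fA τ j < fA τ (τ j + 1) + 1 := by
  intro j
  induction j using Nat.strong_induction_on with
  | _ j IH =>
    intro hjn hj0
    obtain ⟨m, rfl⟩ : ∃ m, j = m + 1 := ⟨j - 1, by omega⟩
    have hmle : ∀ q, q ≤ m → ∀ p, p ≤ q → fA τ p ≤ fA τ q := by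
      intro q
      induction q with
      | zero => intro _ p hp; interval_cases p; exact le_refl _
      | succ q ihq =>
        intro hq p hp
        rcases Nat.lt_or_ge p (q + 1) with h | h
        · have h1 : fA τ p ≤ fA τ q := ihq (by omega) p (by omega)
          have h2 := (IH (q + 1) (by omega) (by omega) (by omega)).1
          simp only [Nat.add_sub_cancel] at h2
          linarith
        · have : p = q + 1 := by omega
          rw [this]
    have hτ : τ (m + 1) < m + 1 := hlt (m + 1) hj0 hjn
    have hminτ : min (τ (m + 1)) m = τ (m + 1) := by omega
    simp only [Nat.add_sub_cancel]
    by_cases hcase : τ (m + 1) = m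
    · have hval : fA τ (m + 1) = fA τ m + 2 := by
        rw [fA, if_pos (by omega)]
      rw [hval, hcase]
      refine ⟨by linarith, by linarith, by linarith⟩
    · have ham : τ (m + 1) < m := by omega
      have hm0 : 0 < m := by omega
      set A := max (fA τ m) (fA τ (τ (m + 1)) + 1) with hA
      set B := fA τ (τ (m + 1) + 1) + 1 with hB
      have hfm : fA τ m < B := by
        have h3 := (IH m (by omega) (by omega) hm0).2.2
        have h4 : τ m ≤ τ (m + 1) := hmono m (m + 1) hm0 (by omega) hjn
        have h5 : fA τ (τ m + 1) ≤ fA τ (τ (m + 1) + 1) := hmle (τ (m + 1) + 1) (by omega) _ (by omega)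
        rw [hB]; linarith
      have hfa : fA τ (τ (m + 1)) < fA τ (τ (m + 1) + 1) := by
        have := (IH (τ (m + 1) + 1) (by omega) (by omega) (by omega)).1
        simpa using this
      have hAB : A < B := by
        rw [hA, hB]
        apply max_lt (by rw [← hB]; exact hfm) (by linarith)
      have hval : fA τ (m + 1) = (A + min B (A + 2)) / 2 := by
        rw [fA, if_neg (by omega), hminτ]
      have hlow : A < fA τ (m + 1) := by
        rw [hval]
        have h1 : A < min B (A + 2) := lt_min hAB (by linarith)
        linarith
      have hup : fA τ (m + 1) < B := by
        rw [hval]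
        have h1 : min B (A + 2) ≤ B := min_le_left _ _
        linarith
      refine ⟨lt_of_le_of_lt (le_max_left _ _) hlow,
        lt_of_le_of_lt (le_max_right _ _) hlow, hup⟩

lemma fA_mono (τ : ℕ → ℕ) (n : ℕ) (hlt : ∀ j, 0 < j → j < n → τ j < j)
    (hmono : ∀ i j, 0 < i → i ≤ j → j < n → τ i ≤ τ j) :
    ∀ p q, p ≤ q → q < n → fA τ p ≤ fA τ q := by
  intro p q hpq hqn
  induction q with
  | zero => interval_cases p; exact le_refl _
  | succ q ihq =>
    rcases Nat.lt_or_ge p (q + 1) with h | h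
    · have h1 : fA τ p ≤ fA τ q := ihq (by omega) (by omega)
      have h2 := (fA_props τ n hlt hmono (q + 1) hqn (by omega)).1
      simp only [Nat.add_sub_cancel] at h2
      linarith
    · have : p = q + 1 := by omega
      rw [this]

lemma fA_smono (τ : ℕ → ℕ) (n : ℕ) (hlt : ∀ j, 0 < j → j < n → τ j < j)
    (hmono : ∀ i j, 0 < i → i ≤ j → j < n → τ i ≤ τ j) :
    ∀ p q, p < q → q < n → fA τ p < fA τ q := by
  intro p q hpq hqn
  have h1 : fA τ p ≤ fA τ (q - 1) := fA_mono τ n hlt hmono p (q - 1) (by omega) (by omega)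
  have h2 := (fA_props τ n hlt hmono q hqn (by omega)).1
  linarith

lemma fA_char (τ : ℕ → ℕ) (n : ℕ) (hlt : ∀ j, 0 < j → j < n → τ j < j)
    (hmono : ∀ i j, 0 < i → i ≤ j → j < n → τ i ≤ τ j) :
    ∀ i j, i < j → j < n → (1 < fA τ j - fA τ i ↔ i ≤ τ j) := by
  intro i j hij hjn
  have hp := fA_props τ n hlt hmono j hjn (by omega)
  have hτj : τ j < j := hlt j (by omega) hjn
  constructor
  · intro h
    by_contra hle
    push_neg at hle
    have h1 : fA τ (τ j + 1) ≤ fA τ i := fA_mono τ n hlt hmono (τ j + 1) i (by omega) (by omega)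
    linarith [hp.2.2]
  · intro h
    have h1 : fA τ i ≤ fA τ (τ j) := fA_mono τ n hlt hmono i (τ j) h (by omega)
    linarith [hp.2.1]


open Classical in
lemma burning {V : Type*} [Fintype V] (G : SimpleGraph V) (v₀ : V) (c : V → ℤ)
    (h0 : ∀ v, v ≠ v₀ → 0 ≤ c v)
    (hss : ¬ ∃ X : Set V, X.Nonempty ∧ v₀ ∉ X ∧ ∀ v, v ≠ v₀ →
      0 ≤ c v - X.indicator (fun u => (vdeg G u : ℤ)) v + ({u | u ∈ X ∧ G.Adj v u}.ncard : ℤ)) :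
    ∀ k, 0 < k → k ≤ Fintype.card V →
    ∃ (u : ℕ → V) (t : ℕ → ℕ),
      Set.InjOn u (Set.Iio k) ∧ u 0 = v₀ ∧ t 0 = 0 ∧
      (∀ i j, i ≤ j → j < k → t i ≤ t j) ∧
      (∀ i, 0 < i → i < k → t i < i ∧
        ((Finset.range (t i + 1)).filter (fun j => G.Adj (u j) (u i))).card = (c (u i)).toNat + 1) ∧
      (∀ v, (∀ j, j < k → u j ≠ v) →
        ((Finset.range (t (k-1))).filter (fun j => G.Adj (u j) v)).card ≤ (c v).toNat) := by
  intro k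
  induction k with
  | zero => omega
  | succ k IHk =>
    intro _ hkcard
    rcases Nat.eq_zero_or_pos k with hk0 | hkpos
    · subst hk0
      refine ⟨fun _ => v₀, fun _ => 0, ?_, rfl, rfl, ?_, ?_, ?_⟩
      · intro a ha b hb _
        simp only [Set.mem_Iio] at ha hb
        omega
      · intro i j _ _; exact le_refl _
      · intro i h1 h2; omega
      · intro v hv
        simp
    obtain ⟨u, t, hinj, hu0, ht0, htmono, hcnt, hinv⟩ := IHk hkpos (by omega)
    -- the set of unburnt vertices
    set X : Set V := {w : V | ∀ j, j < k → u j ≠ w} with hX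
    have hXne : X.Nonempty := by
      by_contra hXe
      rw [Set.not_nonempty_iff_eq_empty] at hXe
      have hsurj : Function.Surjective (fun j : Fin k => u j.1) := by
        intro w
        have : w ∉ X := by rw [hXe]; exact Set.notMem_empty w
        simp only [hX, Set.mem_setOf_eq, not_forall] at this
        obtain ⟨j, hj, hju⟩ := this
        push_neg at hju
        exact ⟨⟨j, hj⟩, hju⟩
      have := Fintype.card_le_of_surjective _ hsurj
      simp only [Fintype.card_fin] at this
      omega
    have hv₀X : v₀ ∉ X := by
      intro h
      exact h 0 hkpos hu0
    have h1 : ¬ ∀ v, v ≠ v₀ →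
        0 ≤ c v - X.indicator (fun w => (vdeg G w : ℤ)) v + ({w | w ∈ X ∧ G.Adj v w}.ncard : ℤ) :=
      fun h => hss ⟨X, hXne, hv₀X, h⟩
    push_neg at h1
    obtain ⟨vs, hvsne, hvslt⟩ := h1
    have hvsX : vs ∈ X := by
      by_contra h
      rw [Set.indicator_of_notMem h] at hvslt
      have := h0 vs hvsne
      have hn : (0:ℤ) ≤ ({w | w ∈ X ∧ G.Adj vs w}.ncard : ℤ) := Int.ofNat_nonneg _
      linarith
    rw [Set.indicator_of_mem hvsX] at hvslt
    -- count of burnt neighbors of vs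
    have hdeg : {w | G.Adj vs w}.ncard
        = {w | w ∈ X ∧ G.Adj vs w}.ncard + {w | w ∉ X ∧ G.Adj vs w}.ncard := by
      rw [← Set.ncard_union_eq ?_ (Set.toFinite _) (Set.toFinite _)]
      · congr 1
        ext w
        simp only [Set.mem_setOf_eq, Set.mem_union]
        tauto
      · rw [Set.disjoint_left]
        rintro w ⟨hw1, -⟩ ⟨hw2, -⟩
        exact hw2 hw1
    have hburnt : {w | w ∉ X ∧ G.Adj vs w}.ncard
        = ((Finset.range k).filter (fun j => G.Adj (u j) vs)).card := by
      have himg : {w | w ∉ X ∧ G.Adj vs w}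
          = u '' ↑((Finset.range k).filter (fun j => G.Adj (u j) vs)) := by
        ext w
        simp only [Set.mem_setOf_eq, Set.mem_image, Finset.coe_filter, Finset.mem_range, hX]
        constructor
        · rintro ⟨hw1, hw2⟩
          simp only [Set.mem_setOf_eq, not_forall] at hw1
          obtain ⟨j, hj, hju⟩ := hw1
          push_neg at hju
          exact ⟨j, ⟨hj, by rw [hju]; exact hw2.symm⟩, hju⟩
        · rintro ⟨j, ⟨hj, hadj⟩, rfl⟩
          refine ⟨?_, hadj.symm⟩
          simp only [Set.mem_setOf_eq, not_forall]
          exact ⟨j, hj, by simp⟩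
      rw [himg, Set.ncard_image_of_injOn, Set.ncard_coe_finset]
      intro a ha b hb hab
      simp only [Finset.coe_filter, Finset.mem_range, Set.mem_setOf_eq] at ha hb
      exact hinj (Set.mem_Iio.mpr ha.1) (Set.mem_Iio.mpr hb.1) hab
    have key : (c vs).toNat + 1 ≤ ((Finset.range k).filter (fun j => G.Adj (u j) vs)).card := by
      have hc0 : 0 ≤ c vs := h0 vs hvsne
      have : (c vs : ℤ) < ((Finset.range k).filter (fun j => G.Adj (u j) vs)).card := by
        simp only [vdeg] at hvslt
        rw [hdeg, hburnt] at hvslt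
        push_cast at hvslt ⊢
        linarith
      omega
    -- find minimal burnable time
    have hQex : ∃ m, ∃ v, (∀ j, j < k → u j ≠ v) ∧
        (c v).toNat + 1 ≤ ((Finset.range m).filter (fun j => G.Adj (u j) v)).card :=
      ⟨k, vs, hvsX, key⟩
    set m₀ := Nat.find hQex with hm₀
    obtain ⟨v₁, hv₁X, hv₁c⟩ := Nat.find_spec hQex
    rw [← hm₀] at hv₁c
    have hm₀k : m₀ ≤ k := Nat.find_le ⟨vs, hvsX, key⟩
    have hm₀pos : 0 < m₀ := by
      rcases Nat.eq_zero_or_pos m₀ with h | h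
      · exfalso
        rw [h] at hv₁c
        simp at hv₁c
      · exact h
    have hmin : ∀ v, (∀ j, j < k → u j ≠ v) →
        ((Finset.range (m₀ - 1)).filter (fun j => G.Adj (u j) v)).card ≤ (c v).toNat := by
      intro v hv
      by_contra h
      push_neg at h
      exact Nat.find_min hQex (show m₀ - 1 < m₀ by omega) ⟨v, hv, h⟩
    have hexact : ((Finset.range m₀).filter (fun j => G.Adj (u j) v₁)).card = (c v₁).toNat + 1 := by
      refine le_antisymm ?_ hv₁c
      have hr : Finset.range m₀ = insert (m₀ - 1) (Finset.range (m₀ - 1)) := by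
        rw [← Finset.range_add_one]
        congr 1
        omega
      have h2 : ((Finset.range m₀).filter (fun j => G.Adj (u j) v₁)).card
          ≤ ((Finset.range (m₀ - 1)).filter (fun j => G.Adj (u j) v₁)).card + 1 := by
        rw [hr, Finset.filter_insert]
        split
        · exact le_trans (Finset.card_insert_le _ _) (by omega)
        · omega
      have h3 := hmin v₁ hv₁X
      omega
    have hTt : t (k - 1) ≤ m₀ - 1 := by
      by_contra h
      push_neg at h
      have hsub : ((Finset.range m₀).filter (fun j => G.Adj (u j) v₁)).card
          ≤ ((Finset.range (t (k - 1))).filter (fun j => G.Adj (u j) v₁)).card :=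
        Finset.card_le_card (Finset.filter_subset_filter _ (by
          apply Finset.range_subset_range.mpr
          omega))
      have := hinv v₁ hv₁X
      omega
    -- extend
    set u' : ℕ → V := fun j => if j = k then v₁ else u j with hu'def
    set t' : ℕ → ℕ := fun j => if j = k then m₀ - 1 else t j with ht'def
    have hu'k : u' k = v₁ := if_pos rfl
    have hu'j : ∀ j, j ≠ k → u' j = u j := fun j h => if_neg h
    have ht'k : t' k = m₀ - 1 := if_pos rfl
    have ht'j : ∀ j, j ≠ k → t' j = t j := fun j h => if_neg h
    refine ⟨u', t', ?_, ?_, ?_, ?_, ?_, ?_⟩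
    · intro a ha b hb hab
      simp only [Set.mem_Iio] at ha hb
      by_cases hak : a = k <;> by_cases hbk : b = k
      · omega
      · exfalso
        subst hak
        rw [hu'k, hu'j b hbk] at hab
        exact hv₁X b (by omega) hab.symm
      · exfalso
        subst hbk
        rw [hu'k, hu'j a hak] at hab
        exact hv₁X a (by omega) hab
      · rw [hu'j a hak, hu'j b hbk] at hab
        exact hinj (Set.mem_Iio.mpr (by omega)) (Set.mem_Iio.mpr (by omega)) hab
    · rw [hu'j 0 (by omega)]; exact hu0
    · rw [ht'j 0 (by omega)]; exact ht0
    · intro i j hij hjk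
      by_cases hjk' : j = k
      · subst hjk'
        rw [ht'k]
        by_cases hik : i = j
        · rw [hik, ht'k]
        · rw [ht'j i hik]
          exact le_trans (htmono i (j - 1) (by omega) (by omega)) hTt
      · rw [ht'j j hjk', ht'j i (by omega)]
        exact htmono i j hij (by omega)
    · intro i h1 h2
      by_cases hik : i = k
      · subst hik
        rw [ht'k, hu'k]
        refine ⟨by omega, ?_⟩
        have hm : m₀ - 1 + 1 = m₀ := by omega
        rw [hm]
        have hcongr : (Finset.range m₀).filter (fun j => G.Adj (u' j) v₁)
            = (Finset.range m₀).filter (fun j => G.Adj (u j) v₁) := by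
          apply Finset.filter_congr
          intro j hj
          rw [Finset.mem_range] at hj
          rw [hu'j j (by omega)]
        rw [hcongr, hexact]
      · rw [ht'j i hik, hu'j i hik]
        have hold := hcnt i h1 (by omega)
        refine ⟨hold.1, ?_⟩
        rw [← hold.2]
        congr 1
        apply Finset.filter_congr
        intro j hj
        rw [Finset.mem_range] at hj
        rw [hu'j j (by omega)]
    · intro v hv
      have hkk : k + 1 - 1 = k := by omega
      rw [hkk, ht'k]
      have hv' : ∀ j, j < k → u j ≠ v := by
        intro j hj
        rw [← hu'j j (by omega)]
        exact hv j (by omega)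
      have hcongr : (Finset.range (m₀ - 1)).filter (fun j => G.Adj (u' j) v)
          = (Finset.range (m₀ - 1)).filter (fun j => G.Adj (u j) v) := by
        apply Finset.filter_congr
        intro j hj
        rw [Finset.mem_range] at hj
        rw [hu'j j (by omega)]
      rw [hcongr]
      exact hmin v hv'


open Classical in
lemma backward_dir {V : Type*} [Fintype V] (G : SimpleGraph V) (v₀ : V) (c : V → ℤ)
    (hc0 : c v₀ = -1) (hss : Superstable G v₀ c) :
    ∃ O : V → V → Prop, IsSemiorientation G O ∧
      (∀ v, G.Adj v₀ v → O v₀ v) ∧ (∀ v, v ≠ v₀ → 1 ≤ indeg O v) ∧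
      c = fun v => (indeg O v : ℤ) - 1 := by
  haveI : Nonempty V := ⟨v₀⟩
  set n := Fintype.card V with hn
  have hnpos : 0 < n := Fintype.card_pos
  obtain ⟨u, t, hinj, hu0, ht0, htmono, hcnt, -⟩ :=
    burning G v₀ c hss.1 hss.2 n hnpos le_rfl
  have hlt : ∀ j, 0 < j → j < n → t j < j := fun j h1 h2 => (hcnt j h1 h2).1
  have hmono : ∀ i j, 0 < i → i ≤ j → j < n → t i ≤ t j :=
    fun i j _ hij hjn => htmono i j hij hjn
  -- surjectivity
  have hsurj : ∀ v : V, ∃ j, j < n ∧ u j = v := by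
    by_contra h
    push_neg at h
    obtain ⟨v, hv⟩ := h
    have h1 : (u '' Set.Iio n).ncard = n := by
      rw [Set.ncard_image_of_injOn hinj, ← Finset.coe_range, Set.ncard_coe_finset,
        Finset.card_range]
    have hsub : u '' Set.Iio n ⊆ Set.univ \ {v} := by
      rintro w ⟨j, hj, rfl⟩
      exact ⟨Set.mem_univ _, fun hw => hv j (Set.mem_Iio.mp hj) (by simpa using hw)⟩
    have h2 : (u '' Set.Iio n).ncard ≤ (Set.univ \ {v} : Set V).ncard :=
      Set.ncard_le_ncard hsub (Set.toFinite _)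
    have h3 : (Set.univ \ {v} : Set V).ncard = n - 1 := by
      rw [Set.ncard_diff (Set.subset_univ _) (Set.toFinite _), Set.ncard_univ,
        Set.ncard_singleton, Nat.card_eq_fintype_card]
    omega
  set idx : V → ℕ := fun v => (hsurj v).choose with hidxdef
  have hidx : ∀ v, idx v < n ∧ u (idx v) = v := fun v => (hsurj v).choose_spec
  have hidx0 : idx v₀ = 0 :=
    hinj (Set.mem_Iio.mpr (hidx v₀).1) (Set.mem_Iio.mpr hnpos) (by rw [(hidx v₀).2, hu0])
  have hidxu : ∀ j, j < n → idx (u j) = j := fun j hj =>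
    hinj (Set.mem_Iio.mpr (hidx (u j)).1) (Set.mem_Iio.mpr hj) (hidx (u j)).2
  have hidxne : ∀ v, v ≠ v₀ → 0 < idx v := by
    intro v hv
    rcases Nat.eq_zero_or_pos (idx v) with h | h
    · exfalso
      apply hv
      have := (hidx v).2
      rw [h, hu0] at this
      exact this.symm
    · exact h
  set x : V → ℝ := fun v => fA t (idx v) with hxdef
  set O : V → V → Prop := fun a b => G.Adj a b ∧ 1 < x b - x a with hOdef
  have hOpo : IsPartialOrientation G O := by
    intro a b ⟨hab, hx⟩
    exact ⟨hab, fun ⟨_, hx'⟩ => by linarith⟩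
  -- characterization of O
  have hchar : ∀ a b, O a b ↔ G.Adj a b ∧ idx a ≤ t (idx b) := by
    intro a b
    constructor
    · rintro ⟨hab, hx⟩
      refine ⟨hab, ?_⟩
      have hne : idx a ≠ idx b := by
        intro h
        have : a = b := by rw [← (hidx a).2, ← (hidx b).2, h]
        exact hab.ne this
      rcases Nat.lt_or_ge (idx a) (idx b) with h | h
      · exact (fA_char t n hlt hmono (idx a) (idx b) h (hidx b).1).mp hx
      · exfalso
        have : fA t (idx b) < fA t (idx a) :=
          fA_smono t n hlt hmono _ _ (by omega) (hidx a).1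
        simp only [hxdef] at hx
        linarith
    · rintro ⟨hab, hle⟩
      refine ⟨hab, ?_⟩
      have hbpos : 0 < idx b := by
        apply hidxne
        intro h
        rw [h, hidx0, ht0] at hle
        have := hidxne a (fun h' => (by rw [h, h'] at hab; exact hab.ne rfl))
        omega
      have hta : t (idx b) < idx b := hlt (idx b) hbpos (hidx b).1
      exact (fA_char t n hlt hmono (idx a) (idx b) (by omega) (hidx b).1).mpr hle
  -- semiorientation
  have hsem : IsSemiorientation G O := by
    refine ⟨hOpo, ?_⟩
    intro m cyc h3 hcinj hcadj hcnob
    haveI : NeZero m := ⟨by omega⟩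
    set d : ZMod m → ℝ := fun i => x (cyc (i + 1)) - x (cyc i) with hddef
    have hsum : ∑ i, d i = 0 := by
      have h1 : ∑ i : ZMod m, x (cyc (i + 1)) = ∑ i : ZMod m, x (cyc i) :=
        Fintype.sum_equiv (Equiv.addRight (1 : ZMod m)) _ _ (fun i => rfl)
      simp only [hddef]
      rw [Finset.sum_sub_distrib, h1, sub_self]
    set S : Finset (ZMod m) := Finset.univ.filter (fun i => O (cyc i) (cyc (i + 1))) with hSdef
    have hdS : ∀ i ∈ S, (1:ℝ) < d i := by
      intro i hi
      simp only [hSdef, Finset.mem_filter] at hi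
      exact hi.2.2
    have hdSc : ∀ i ∈ Sᶜ, (-1:ℝ) ≤ d i := by
      intro i _
      have hnb := hcnob i
      simp only [hOdef] at hnb
      push_neg at hnb
      have := hnb (hcadj i).symm
      simp only [hddef]
      linarith
    have hsplit : ∑ i ∈ S, d i + ∑ i ∈ Sᶜ, d i = 0 := by
      rw [Finset.sum_add_sum_compl]; exact hsum
    have hcard : S.card < Sᶜ.card := by
      rcases Finset.eq_empty_or_nonempty S with hS | hS
      · rw [hS]
        simp only [Finset.card_empty]
        rw [Finset.compl_empty, Finset.card_univ]
        have : Fintype.card (ZMod m) = m := ZMod.card m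
        omega
      · have h1 : (S.card : ℝ) * 1 < ∑ i ∈ S, d i := by
          have h0 := Finset.sum_lt_sum_of_nonempty hS hdS
          rw [Finset.sum_const, nsmul_eq_mul] at h0
          linarith
        have h2 : (Sᶜ.card : ℝ) * (-1) ≤ ∑ i ∈ Sᶜ, d i := by
          have := Finset.card_nsmul_le_sum Sᶜ d (-1) hdSc
          simpa [nsmul_eq_mul] using this
        have : (S.card : ℝ) < (Sᶜ.card : ℝ) := by linarith
        exact_mod_cast this
    have hSset : {i : ZMod m | O (cyc i) (cyc (i + 1))}.ncard = S.card := by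
      rw [← Set.ncard_coe_finset]
      congr 1
      ext i
      simp [hSdef]
    have hBset : {i : ZMod m | IsBlank G O (cyc i) (cyc (i + 1))}.ncard = Sᶜ.card := by
      rw [← Set.ncard_coe_finset]
      congr 1
      ext i
      simp only [Finset.coe_compl, Set.mem_compl_iff, Finset.mem_coe, hSdef,
        Finset.mem_filter, Finset.mem_univ, true_and, Set.mem_setOf_eq]
      constructor
      · rintro ⟨-, hb, -⟩
        exact hb
      · intro hb
        exact ⟨hcadj i, hb, hcnob i⟩
    rw [hSset, hBset]
    exact hcard
  -- indegree computation
  have hindeg : ∀ v, v ≠ v₀ → indeg O v = (c v).toNat + 1 := by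
    intro v hv
    have hvpos : 0 < idx v := hidxne v hv
    have hvn : idx v < n := (hidx v).1
    have htv : t (idx v) < idx v := hlt (idx v) hvpos hvn
    have hset : {w | O w v}
        = u '' ↑((Finset.range (t (idx v) + 1)).filter (fun j => G.Adj (u j) v)) := by
      ext w
      simp only [Set.mem_setOf_eq, Set.mem_image, Finset.coe_filter, Finset.mem_range]
      constructor
      · intro hw
        rw [hchar] at hw
        obtain ⟨hadj, hle⟩ := hw
        refine ⟨idx w, ⟨by omega, ?_⟩, (hidx w).2⟩
        rw [(hidx w).2]
        exact hadj
      · rintro ⟨j, ⟨hj, hadj⟩, rfl⟩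
        rw [hchar]
        exact ⟨hadj, by rw [hidxu j (by omega)]; omega⟩
    have hcv := (hcnt (idx v) hvpos hvn).2
    rw [(hidx v).2] at hcv
    rw [indeg, hset, Set.ncard_image_of_injOn, Set.ncard_coe_finset, hcv]
    · intro a ha b hb hab
      simp only [Finset.coe_filter, Finset.mem_range, Set.mem_setOf_eq] at ha hb
      exact hinj (Set.mem_Iio.mpr (by omega)) (Set.mem_Iio.mpr (by omega)) hab
  have hindeg0 : indeg O v₀ = 0 := by
    have : {w | O w v₀} = ∅ := by
      ext w
      simp only [Set.mem_setOf_eq, Set.mem_empty_iff_false, iff_false]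
      intro hw
      rw [hchar] at hw
      obtain ⟨hadj, hle⟩ := hw
      rw [hidx0, ht0] at hle
      have h1 : idx w = 0 := by omega
      have : w = v₀ := by rw [← (hidx w).2, h1, hu0]
      rw [this] at hadj
      exact hadj.ne rfl
    rw [indeg, this, Set.ncard_empty]
  refine ⟨O, hsem, ?_, ?_, ?_⟩
  · intro v hadj
    rw [hchar]
    refine ⟨hadj, ?_⟩
    rw [hidx0]
    omega
  · intro v hv
    rw [hindeg v hv]
    omega
  · funext v
    by_cases hv : v = v₀
    · rw [hv, hc0, hindeg0]
      rfl
    · rw [hindeg v hv]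
      have := hss.1 v hv
      omega

/-- Fix `v₀ ∈ V`.  The set of divisors `v ↦ indeg_O v - 1`, as `O` ranges over the
`G`-semiorientations in which `v₀` is a source and `indeg_O v ≥ 1` for every
`v ≠ v₀`, equals the set of `G`-parking functions with respect to `v₀`: divisors
`c` with `c v₀ = -1` whose restriction to the nonsink vertices is a superstable
configuration on `G` with sink `v₀`. -/
theorem stmt16 {V : Type*} [Fintype V] (G : SimpleGraph V) (hconn : G.Connected)
    (v₀ : V) :
    {c : V → ℤ | ∃ O : V → V → Prop, IsSemiorientation G O ∧
        (∀ v, G.Adj v₀ v → O v₀ v) ∧ (∀ v, v ≠ v₀ → 1 ≤ indeg O v) ∧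
        c = fun v => (indeg O v : ℤ) - 1} =
    {c : V → ℤ | c v₀ = -1 ∧ Superstable G v₀ c} := by
  ext c
  simp only [Set.mem_setOf_eq]
  constructor
  · rintro ⟨O, hsem, hsrc, hind, rfl⟩
    exact (forward_dir G v₀ O hsem hsrc hind : _)
  · rintro ⟨hc0, hss⟩
    exact backward_dir G v₀ c hc0 hss

end Soap
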